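/- arXiv:2111.08522 — 3 statements merged into one kernel-verified Lean document; each statement's English description precedes it below -/
import Mathlib

section
/- Let g : [0,T] → ℂ solve ∂_t g(t) = (1/N) ∑_{j=1}^N 2/(g(t) − λ_j(t)) with λ_j : [0,T] → ℝ continuous, and suppose Im g(t) ≥ δ₁ > 0 for all t ∈ [0,T]. Then for each j and all t ∈ [0,T], ∫_0^t 2/|g(s) − λ_j(s)|² ds ≤ N · log(Im g(0)/Im g(t)) ≤ N · log(Im g(0)/δ₁). -/
open MeasureTheory Set

/-! Because the driving functions are real, `Im (2 / (z - λ)) = -2 Im z / |z - λ|²`, so the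
Loewner equation says `-(log Im g)' = (1/N) ∑ⱼ 2 / |g - λⱼ|² ≥ 0`. A nonnegative derivative is
automatically integrable, so integrating gives `∫₀ᵗ ∑ⱼ 2 / |g - λⱼ|² = N log (Im g(0) / Im g(t))`,
and a single nonnegative summand integrates to at most this. The second inequality is
monotonicity of `log`, as `Im g(t) ≥ δ₁`. -/

theorem Complex.im_two_div_sub_ofReal (z : ℂ) (x : ℝ) :
    (2 / (z - x)).im = -z.im * (2 / ‖z - x‖ ^ 2) := by
  rw [Complex.div_im, Complex.sq_norm]
  simp only [Complex.sub_im, Complex.ofReal_im, sub_zero, Complex.re_ofNat, Complex.im_ofNat]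
  ring

section

variable {ι : Type*} [Fintype ι] {g : ℝ → ℂ} {lam : ι → ℝ → ℝ} {c : ℝ}

theorem hasDerivAt_neg_log_im {t : ℝ} (hpos : 0 < (g t).im)
    (hg : HasDerivAt g ((c : ℂ) * ∑ j, 2 / (g t - (lam j t : ℂ))) t) :
    HasDerivAt (fun s => -Real.log (g s).im) (c * ∑ j, 2 / ‖g t - (lam j t : ℂ)‖ ^ 2) t := by
  have him : HasDerivAt (fun s => (g s).im) ((c : ℂ) * ∑ j, 2 / (g t - (lam j t : ℂ))).im t :=
    Complex.imCLM.hasFDerivAt.comp_hasDerivAt t hg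
  refine (him.log hpos.ne').neg.congr_deriv ?_
  simp only [Complex.im_ofReal_mul, Complex.im_sum, Complex.im_two_div_sub_ofReal,
    ← Finset.mul_sum]
  field_simp

theorem intervalIntegrable_mul_sum_two_div_sq_norm {t : ℝ} (hpos : ∀ s ∈ Icc 0 t, 0 < (g s).im)
    (hg : ∀ s ∈ Icc 0 t, HasDerivAt g ((c : ℂ) * ∑ j, 2 / (g s - (lam j s : ℂ))) s)
    (hc : 0 ≤ c) (ht : 0 ≤ t) :
    IntervalIntegrable (fun s => c * ∑ j, 2 / ‖g s - (lam j s : ℂ)‖ ^ 2) volume 0 t := by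
  have hderiv s (hs : s ∈ Icc 0 t) := hasDerivAt_neg_log_im (hpos s hs) (hg s hs)
  rw [intervalIntegrable_iff_integrableOn_Ioc_of_le ht]
  exact intervalIntegral.integrableOn_deriv_of_nonneg (HasDerivAt.continuousOn hderiv)
    (fun s hs => hderiv s (Ioo_subset_Icc_self hs)) (fun s _ => by positivity)

theorem integral_mul_sum_two_div_sq_norm {t : ℝ} (hpos : ∀ s ∈ Icc 0 t, 0 < (g s).im)
    (hg : ∀ s ∈ Icc 0 t, HasDerivAt g ((c : ℂ) * ∑ j, 2 / (g s - (lam j s : ℂ))) s)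
    (hc : 0 ≤ c) (ht : 0 ≤ t) :
    ∫ s in (0 : ℝ)..t, c * ∑ j, 2 / ‖g s - (lam j s : ℂ)‖ ^ 2
      = Real.log ((g 0).im / (g t).im) := by
  have hderiv s (hs : s ∈ Icc 0 t) := hasDerivAt_neg_log_im (hpos s hs) (hg s hs)
  rw [intervalIntegral.integral_eq_sub_of_hasDerivAt_of_le ht (HasDerivAt.continuousOn hderiv)
    (fun s hs => hderiv s (Ioo_subset_Icc_self hs))
    (intervalIntegrable_mul_sum_two_div_sq_norm hpos hg hc ht),
    Real.log_div (hpos 0 ⟨le_rfl, ht⟩).ne' (hpos t ⟨ht, le_rfl⟩).ne']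
  ring

end

theorem intervalIntegral.integral_le_integral_sum_of_nonneg {ι : Type*} [Fintype ι]
    {F : ι → ℝ → ℝ} {a b : ℝ} (hab : a ≤ b) (hF : ∀ k s, 0 ≤ F k s)
    (hint : IntervalIntegrable (fun s => ∑ k, F k s) volume a b) (j : ι) :
    ∫ s in a..b, F j s ≤ ∫ s in a..b, ∑ k, F k s := by
  rw [intervalIntegral.integral_of_le hab, intervalIntegral.integral_of_le hab]
  exact integral_mono_of_nonneg (ae_of_all _ (hF j)) hint.1
    (ae_of_all _ fun s => Finset.single_le_sum (fun k _ => hF k s) (Finset.mem_univ j))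

theorem stmt3_general (T : ℝ) (N : ℕ)
    (lam : Fin N → ℝ → ℝ)
    (g : ℝ → ℂ) (δ₁ : ℝ) (hδ₁ : 0 < δ₁)
    (hIm : ∀ t ∈ Icc (0:ℝ) T, δ₁ ≤ (g t).im)
    (hg : ∀ t ∈ Icc (0:ℝ) T,
      HasDerivAt g ((1 / (N:ℂ)) * ∑ j, 2 / (g t - (lam j t : ℂ))) t) :
    ∀ j, ∀ t ∈ Icc (0:ℝ) T,
      (∫ s in (0:ℝ)..t, 2 / ‖g s - (lam j s : ℂ)‖ ^ 2)
          ≤ (N:ℝ) * Real.log ((g 0).im / (g t).im)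
      ∧ (N:ℝ) * Real.log ((g 0).im / (g t).im) ≤ (N:ℝ) * Real.log ((g 0).im / δ₁) := by
  intro j t ⟨ht, htT⟩
  have hN : (0 : ℝ) < N := Nat.cast_pos.2 j.pos
  have hsub : Icc 0 t ⊆ Icc 0 T := Icc_subset_Icc_right htT
  have hpos s (hs : s ∈ Icc 0 t) : 0 < (g s).im := hδ₁.trans_le (hIm s (hsub hs))
  have hg' s (hs : s ∈ Icc 0 t) :
      HasDerivAt g ((((N : ℝ)⁻¹ : ℝ) : ℂ) * ∑ k, 2 / (g s - (lam k s : ℂ))) s := by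
    simpa using hg s (hsub hs)
  have hint := intervalIntegrable_mul_sum_two_div_sq_norm hpos hg' (inv_nonneg.2 hN.le) ht
  refine ⟨?_, ?_⟩
  · calc ∫ s in (0:ℝ)..t, 2 / ‖g s - (lam j s : ℂ)‖ ^ 2
        ≤ ∫ s in (0:ℝ)..t, ∑ k, 2 / ‖g s - (lam k s : ℂ)‖ ^ 2 :=
          intervalIntegral.integral_le_integral_sum_of_nonneg
            (F := fun k s => 2 / ‖g s - (lam k s : ℂ)‖ ^ 2) ht (fun _ _ => by positivity)
            (by simpa [hN.ne'] using hint.const_mul (N : ℝ)) j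
      _ = N * ∫ s in (0:ℝ)..t, (N : ℝ)⁻¹ * ∑ k, 2 / ‖g s - (lam k s : ℂ)‖ ^ 2 := by
          rw [intervalIntegral.integral_const_mul, mul_inv_cancel_left₀ hN.ne']
      _ = N * Real.log ((g 0).im / (g t).im) := by
          rw [integral_mul_sum_two_div_sq_norm hpos hg' (inv_nonneg.2 hN.le) ht]
  · have h0 := hpos 0 ⟨le_rfl, ht⟩
    gcongr
    · exact div_pos h0 (hpos t ⟨ht, le_rfl⟩)
    · exact hIm t ⟨ht, htT⟩

theorem stmt3 (T : ℝ) (hT : 0 < T) (N : ℕ) (hN : 1 ≤ N)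
    (lam : Fin N → ℝ → ℝ) (hlam : ∀ j, ContinuousOn (lam j) (Icc 0 T))
    (g : ℝ → ℂ) (δ₁ : ℝ) (hδ₁ : 0 < δ₁)
    (hIm : ∀ t ∈ Icc (0:ℝ) T, δ₁ ≤ (g t).im)
    (hg : ∀ t ∈ Icc (0:ℝ) T,
      HasDerivAt g ((1 / (N:ℂ)) * ∑ j, 2 / (g t - (lam j t : ℂ))) t) :
    ∀ j, ∀ t ∈ Icc (0:ℝ) T,
      (∫ s in (0:ℝ)..t, 2 / ‖g s - (lam j s : ℂ)‖ ^ 2)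
          ≤ (N:ℝ) * Real.log ((g 0).im / (g t).im)
      ∧ (N:ℝ) * Real.log ((g 0).im / (g t).im) ≤ (N:ℝ) * Real.log ((g 0).im / δ₁) :=
  stmt3_general T N lam g δ₁ hδ₁ hIm hg
end

section
/- Let X, X* : [0,T] → ℝ be positive continuous functions satisfying X(t) = a + (4/κ) ∫_0^t ds/X(s) + W(t) and X*(t) = a + (4/κ*) ∫_0^t ds/X*(s) + W(t) for the same continuous function W with W(0) = 0, where 0 < κ ≤ κ* and a > 0. Then for all t ∈ [0,T], sup_{0 ≤ s ≤ t} (X*(s) − X(s))² ≤ (4t/κ²)(κ* − κ). -/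
open MeasureTheory Set

/-!
The common driving function `W` cancels in `X - Xs`, which is therefore differentiable with
derivative `α / X - β / Xs`, where `α = 4 / κ ≥ β = 4 / κ'`. An elementary inequality bounds the
derivative `2 (X - Xs) (α / X - β / Xs)` of `(X - Xs) ^ 2` by `α (α - β) / β = 4 (κ' - κ) / κ ^ 2`,
uniformly in the positive values of `X` and `Xs`; since `X 0 = Xs 0`, the mean value inequality
gives `(X - Xs) ^ 2 ≤ 4 (κ' - κ) t / κ ^ 2`.
-/

lemma two_mul_sub_mul_div_sub_div_le {α β x y : ℝ} (hβ : 0 < β) (hβα : β ≤ α)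
    (hx : 0 < x) (hy : 0 < y) :
    2 * (x - y) * (α / x - β / y) ≤ α * (α - β) / β := by
  rw [div_sub_div _ _ hx.ne' hy.ne', mul_div_assoc', div_le_div_iff₀ (by positivity) hβ]
  obtain ⟨δ, hδ, rfl⟩ : ∃ δ, 0 ≤ δ ∧ α = β + δ := ⟨α - β, sub_nonneg.2 hβα, by ring⟩
  have hpoly : 0 ≤ 2 * β ^ 2 * (x - y) ^ 2 + β * δ * y * (2 * y - x) + δ ^ 2 * x * y := by
    rcases le_total x (2 * y) with h | h
    · have : 0 ≤ 2 * y - x := by linarith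
      positivity
    · have : 0 ≤ x - y / 8 := by linarith
      have : 0 ≤ (4 * β * (x - y) - δ * y) ^ 2 / 8 + β * δ * y ^ 2 + δ ^ 2 * y * (x - y / 8) := by
        positivity
      linarith
  linear_combination hpoly

lemma hasDerivAt_integral_of_continuousOn_Icc {f : ℝ → ℝ} {a b t : ℝ}
    (hf : ContinuousOn f (Icc a b)) (ht : t ∈ Ioo a b) :
    HasDerivAt (fun r => ∫ s in a..r, f s) (f t) t :=
  intervalIntegral.integral_hasDerivAt_right
    ((hf.mono (Icc_subset_Icc le_rfl ht.2.le)).intervalIntegrable_of_Icc ht.1.le)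
    ((hf.mono Ioo_subset_Icc_self).stronglyMeasurableAtFilter isOpen_Ioo t ht)
    (hf.continuousAt (Icc_mem_nhds ht.1 ht.2))

theorem sq_sub_le_mul_of_sub_eq_integral {T α β : ℝ} {u v : ℝ → ℝ} (hβ : 0 < β) (hβα : β ≤ α)
    (hu : ContinuousOn u (Icc 0 T)) (hv : ContinuousOn v (Icc 0 T))
    (hu_pos : ∀ t ∈ Icc 0 T, 0 < u t) (hv_pos : ∀ t ∈ Icc 0 T, 0 < v t)
    (huv : ∀ t ∈ Icc 0 T,
      u t - v t = α * (∫ s in (0:ℝ)..t, 1 / u s) - β * (∫ s in (0:ℝ)..t, 1 / v s)) :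
    ∀ t ∈ Icc 0 T, (u t - v t) ^ 2 ≤ α * (α - β) / β * t := by
  have hu_inv : ContinuousOn (fun s => 1 / u s) (Icc 0 T) :=
    continuousOn_const.div hu fun s hs => (hu_pos s hs).ne'
  have hv_inv : ContinuousOn (fun s => 1 / v s) (Icc 0 T) :=
    continuousOn_const.div hv fun s hs => (hv_pos s hs).ne'
  have hderiv : ∀ t ∈ Ioo 0 T, HasDerivAt (fun r => (u r - v r) ^ 2)
      (2 * (u t - v t) * (α / u t - β / v t)) t := by
    intro t ht
    have hdiff : HasDerivAt (fun r => u r - v r) (α / u t - β / v t) t := by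
      refine (((hasDerivAt_integral_of_continuousOn_Icc hu_inv ht).const_mul α).sub
        ((hasDerivAt_integral_of_continuousOn_Icc hv_inv ht).const_mul β)).congr_of_eventuallyEq
        ?_ |>.congr_deriv (by ring)
      filter_upwards [Ioo_mem_nhds ht.1 ht.2] with r hr using huv r (Ioo_subset_Icc_self hr)
    simpa using hdiff.fun_pow 2
  intro t ht
  have h0 : u 0 - v 0 = 0 := by simpa using huv 0 (left_mem_Icc.2 (ht.1.trans ht.2))
  have hmvt := (convex_Icc 0 T).image_sub_le_mul_sub_of_deriv_le
    (f := fun r => (u r - v r) ^ 2) ((hu.sub hv).fun_pow 2)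
    (fun r hr => by
      rw [interior_Icc] at hr
      exact (hderiv r hr).differentiableAt.differentiableWithinAt)
    (fun r hr => by
      rw [interior_Icc] at hr
      rw [(hderiv r hr).deriv]
      exact two_mul_sub_mul_div_sub_div_le hβ hβα (hu_pos r (Ioo_subset_Icc_self hr))
        (hv_pos r (Ioo_subset_Icc_self hr)))
    0 (left_mem_Icc.2 (ht.1.trans ht.2)) t ht ht.1
  simpa [h0] using hmvt

theorem stmt7_general (T a κ κ' : ℝ)
    (hκ : 0 < κ) (hκκ' : κ ≤ κ')
    (W X Xs : ℝ → ℝ)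
    (hXc : ContinuousOn X (Icc 0 T)) (hXsc : ContinuousOn Xs (Icc 0 T))
    (hXpos : ∀ t ∈ Icc (0:ℝ) T, 0 < X t) (hXspos : ∀ t ∈ Icc (0:ℝ) T, 0 < Xs t)
    (hX : ∀ t ∈ Icc (0:ℝ) T, X t = a + (4 / κ) * (∫ s in (0:ℝ)..t, 1 / X s) + W t)
    (hXs : ∀ t ∈ Icc (0:ℝ) T, Xs t = a + (4 / κ') * (∫ s in (0:ℝ)..t, 1 / Xs s) + W t) :
    ∀ t ∈ Icc (0:ℝ) T, ∀ s ∈ Icc (0:ℝ) t,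
      (Xs s - X s) ^ 2 ≤ (4 * t / κ ^ 2) * (κ' - κ) := by
  have hκ' : 0 < κ' := hκ.trans_le hκκ'
  have hdiff : ∀ t ∈ Icc (0:ℝ) T,
      X t - Xs t = 4 / κ * (∫ s in (0:ℝ)..t, 1 / X s) - 4 / κ' * (∫ s in (0:ℝ)..t, 1 / Xs s) :=
    fun t ht => by rw [hX t ht, hXs t ht]; ring
  have hbound := sq_sub_le_mul_of_sub_eq_integral (by positivity)
    (div_le_div_of_nonneg_left zero_le_four hκ hκκ') hXc hXsc hXpos hXspos hdiff
  have hrate : 4 / κ * (4 / κ - 4 / κ') / (4 / κ') = 4 * (κ' - κ) / κ ^ 2 := by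
    field_simp
  intro t ht s hs
  calc (Xs s - X s) ^ 2 = (X s - Xs s) ^ 2 := by ring
    _ ≤ 4 * (κ' - κ) / κ ^ 2 * s := hrate ▸ hbound s ⟨hs.1, hs.2.trans ht.2⟩
    _ ≤ 4 * (κ' - κ) / κ ^ 2 * t := by gcongr; exact hs.2
    _ = (4 * t / κ ^ 2) * (κ' - κ) := by ring

theorem stmt7 (T a κ κ' : ℝ) (hT : 0 < T) (ha : 0 < a)
    (hκ : 0 < κ) (hκκ' : κ ≤ κ') (hκ'4 : κ' ≤ 4)
    (W X Xs : ℝ → ℝ) (hW : ContinuousOn W (Icc 0 T)) (hW0 : W 0 = 0)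
    (hXc : ContinuousOn X (Icc 0 T)) (hXsc : ContinuousOn Xs (Icc 0 T))
    (hXpos : ∀ t ∈ Icc (0:ℝ) T, 0 < X t) (hXspos : ∀ t ∈ Icc (0:ℝ) T, 0 < Xs t)
    (hX : ∀ t ∈ Icc (0:ℝ) T, X t = a + (4 / κ) * (∫ s in (0:ℝ)..t, 1 / X s) + W t)
    (hXs : ∀ t ∈ Icc (0:ℝ) T, Xs t = a + (4 / κ') * (∫ s in (0:ℝ)..t, 1 / Xs s) + W t) :
    ∀ t ∈ Icc (0:ℝ) T, ∀ s ∈ Icc (0:ℝ) t,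
      (Xs s - X s) ^ 2 ≤ (4 * t / κ ^ 2) * (κ' - κ) :=
  stmt7_general T a κ κ' hκ hκκ' W X Xs hXc hXsc hXpos hXspos hX hXs
end

section
/- Let 0 < κ < κ* and let a > 0, T > 0. Suppose X, X* : [0,T] → (0,∞) are continuous with running infima M(t) = inf_{s ≤ t} X(s) > 0 and M*(t) = inf_{s ≤ t} X*(s) > 0, sup_{s ≤ t}|X*(s) − X(s)| ≤ (2√t/κ)(κ*−κ)^{1/2}, and κ* X*(t) − κ X(t) = (κ*−κ)a + 4∫_0^t (X(s)−X*(s))/(X*(s)X(s)) ds + (κ*−κ)W(t) for a continuous W. Then |∫_0^t (κ* X*(s) − κ X(s))/(κ*κ · X*(s) X(s)) ds| · 2 ≤ (κ*−κ)·(2a/(κ*κ))·t/(M*(t)M(t)) + (κ*−κ)^{1/2}·(16/(κ*κ²))·t^{5/2}/((M*(t)M(t))²) + (κ*−κ)·(2/(κ*κ))·(t/(M*(t)M(t)))·sup_{0≤s≤t}|W(s)|. -/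
/-!
On `[0, t]` the product `X* X` is at least `C = M*(t) M(t)`, so the integrand of the inner integral
in the equation for `κ* X* − κ X` is bounded by `sup |X* − X| / C`, and that integral grows at most
linearly. Hence `|κ* X* − κ X|` is bounded by an affine function of `s`; dividing by `κ* κ X* X ≥ κ* κ C`
and integrating this affine bound over `[0, t]` gives the estimate.
-/

open MeasureTheory Set

lemma sInf_image_Icc_le {f : ℝ → ℝ} {a b s : ℝ} (hf : ContinuousOn f (Icc a b))
    (hs : s ∈ Icc a b) : sInf (f '' Icc a b) ≤ f s :=
  csInf_le (isCompact_Icc.image_of_continuousOn hf).bddBelow ⟨s, hs, rfl⟩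

lemma le_sSup_image_Icc {f : ℝ → ℝ} {a b s : ℝ} (hf : ContinuousOn f (Icc a b))
    (hs : s ∈ Icc a b) : f s ≤ sSup (f '' Icc a b) :=
  le_csSup (isCompact_Icc.image_of_continuousOn hf).bddAbove ⟨s, hs, rfl⟩

lemma abs_div_le_div_of_abs_le {x y K C : ℝ} (hC : 0 < C) (hCy : C ≤ y) (hx : |x| ≤ K) :
    |x / y| ≤ K / C := by
  rw [abs_div, abs_of_pos (hC.trans_le hCy)]
  exact div_le_div₀ ((abs_nonneg x).trans hx) hx hC hCy

lemma abs_intervalIntegral_le_of_abs_le_affine {f : ℝ → ℝ} {A B t : ℝ} (ht : 0 ≤ t)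
    (hb : ∀ s ∈ Icc 0 t, |f s| ≤ A + B * s) :
    |∫ s in (0:ℝ)..t, f s| ≤ A * t + B * (t ^ 2 / 2) :=
  calc |∫ s in (0:ℝ)..t, f s|
      ≤ ∫ s in (0:ℝ)..t, (A + B * s) :=
        intervalIntegral.norm_integral_le_of_norm_le (μ := volume) (f := f) ht
          (.of_forall fun s hs => hb s (Ioc_subset_Icc_self hs))
          ((by fun_prop : Continuous fun s : ℝ => A + B * s).intervalIntegrable _ _)
    _ = A * t + B * (t ^ 2 / 2) := by
        rw [intervalIntegral.integral_add intervalIntegrable_const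
          (Continuous.intervalIntegrable (by fun_prop) _ _),
          intervalIntegral.integral_const_mul, integral_id]
        simp [mul_comm]

section

variable {κ κ' a t C K S : ℝ} {X Xs W : ℝ → ℝ}

lemma abs_integral_sub_div_mul_le (hC : 0 < C) (ht : 0 ≤ t)
    (hCle : ∀ s ∈ Icc 0 t, C ≤ Xs s * X s) (hdiff : ∀ s ∈ Icc 0 t, |Xs s - X s| ≤ K) :
    |∫ s in (0:ℝ)..t, (X s - Xs s) / (Xs s * X s)| ≤ K / C * t := by
  have h := intervalIntegral.norm_integral_le_of_norm_le_const
    (C := K / C) (f := fun s => (X s - Xs s) / (Xs s * X s)) (a := 0) (b := t) fun s hs' => by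
      rw [uIoc_of_le ht] at hs'
      have hs : s ∈ Icc 0 t := Ioc_subset_Icc_self hs'
      exact abs_div_le_div_of_abs_le hC (hCle s hs) (abs_sub_comm (X s) _ ▸ hdiff s hs)
  simpa [abs_of_nonneg ht] using h

variable (hκ : 0 < κ) (hκκ' : κ < κ') (ha : 0 ≤ a) (hC : 0 < C)
  (hCle : ∀ s ∈ Icc 0 t, C ≤ Xs s * X s) (hdiff : ∀ s ∈ Icc 0 t, |Xs s - X s| ≤ K)
  (hW : ∀ s ∈ Icc 0 t, |W s| ≤ S)
  (heq : ∀ s ∈ Icc 0 t, κ' * Xs s - κ * X s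
    = (κ' - κ) * a + 4 * (∫ u in (0:ℝ)..s, (X u - Xs u) / (Xs u * X u)) + (κ' - κ) * W s)
include hκκ' ha hC hCle hdiff hW heq

lemma abs_mul_sub_mul_le {s : ℝ} (hs : s ∈ Icc 0 t) :
    |κ' * Xs s - κ * X s| ≤ (κ' - κ) * (a + S) + 4 * (K / C) * s := by
  have hsub : Icc 0 s ⊆ Icc 0 t := Icc_subset_Icc le_rfl hs.2
  have hint := abs_integral_sub_div_mul_le hC hs.1 (fun u hu => hCle u (hsub hu))
    (fun u hu => hdiff u (hsub hu))
  have hd : 0 < κ' - κ := sub_pos.2 hκκ'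
  rw [heq s hs]
  calc _ ≤ |(κ' - κ) * a| + |4 * (∫ u in (0:ℝ)..s, (X u - Xs u) / (Xs u * X u))|
        + |(κ' - κ) * W s| := abs_add_three _ _ _
    _ ≤ (κ' - κ) * a + 4 * (K / C * s) + (κ' - κ) * S := by
        rw [abs_mul, abs_mul, abs_mul, abs_of_pos hd, abs_of_nonneg ha, abs_of_pos four_pos]
        gcongr
        exact hW s hs
    _ = _ := by ring

include hκ

lemma abs_integral_mul_sub_mul_div_le (ht : 0 ≤ t) :
    |∫ s in (0:ℝ)..t, (κ' * Xs s - κ * X s) / (κ' * κ * (Xs s * X s))|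
      ≤ (κ' - κ) * (a + S) / (κ' * κ * C) * t + 4 * K / (κ' * κ * C ^ 2) * (t ^ 2 / 2) := by
  have hκκ : 0 < κ' * κ := mul_pos (hκ.trans hκκ') hκ
  refine abs_intervalIntegral_le_of_abs_le_affine ht fun s hs => ?_
  calc _ ≤ ((κ' - κ) * (a + S) + 4 * (K / C) * s) / (κ' * κ * C) :=
        abs_div_le_div_of_abs_le (mul_pos hκκ hC)
          (mul_le_mul_of_nonneg_left (hCle s hs) hκκ.le)
          (abs_mul_sub_mul_le hκκ' ha hC hCle hdiff hW heq hs)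
    _ = _ := by field_simp

end

theorem stmt10_general (T a κ κ' : ℝ) (ha : 0 < a)
    (hκ : 0 < κ) (hκκ' : κ < κ')
    (X Xs W : ℝ → ℝ)
    (hXc : ContinuousOn X (Icc 0 T)) (hXsc : ContinuousOn Xs (Icc 0 T))
    (hWc : ContinuousOn W (Icc 0 T))
    (M Ms : ℝ → ℝ)
    (hM : ∀ t ∈ Icc (0:ℝ) T, M t = sInf (X '' Icc 0 t))
    (hMs : ∀ t ∈ Icc (0:ℝ) T, Ms t = sInf (Xs '' Icc 0 t))
    (hMpos : ∀ t ∈ Icc (0:ℝ) T, 0 < M t) (hMspos : ∀ t ∈ Icc (0:ℝ) T, 0 < Ms t)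
    (hsup : ∀ t ∈ Icc (0:ℝ) T, ∀ s ∈ Icc (0:ℝ) t,
      |Xs s - X s| ≤ (2 * Real.sqrt t / κ) * Real.sqrt (κ' - κ))
    (heq : ∀ t ∈ Icc (0:ℝ) T,
      κ' * Xs t - κ * X t
        = (κ' - κ) * a + 4 * (∫ s in (0:ℝ)..t, (X s - Xs s) / (Xs s * X s))
          + (κ' - κ) * W t) :
    ∀ t ∈ Icc (0:ℝ) T,
      2 * |∫ s in (0:ℝ)..t, (κ' * Xs s - κ * X s) / (κ' * κ * (Xs s * X s))|
        ≤ (κ' - κ) * (2 * a / (κ' * κ)) * t / (Ms t * M t)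
          + Real.sqrt (κ' - κ) * (16 / (κ' * κ ^ 2)) * (t ^ ((5:ℝ)/2)) / (Ms t * M t) ^ 2
          + (κ' - κ) * (2 / (κ' * κ)) * (t / (Ms t * M t)) *
              sSup ((fun s => |W s|) '' Icc 0 t) := by
  intro t ht
  have hsub : Icc 0 t ⊆ Icc 0 T := Icc_subset_Icc le_rfl ht.2
  have hCle (s : ℝ) (hs : s ∈ Icc 0 t) : Ms t * M t ≤ Xs s * X s := by
    have hMsX : Ms t ≤ Xs s := hMs t ht ▸ sInf_image_Icc_le (hXsc.mono hsub) hs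
    exact mul_le_mul hMsX (hM t ht ▸ sInf_image_Icc_le (hXc.mono hsub) hs) (hMpos t ht).le
      ((hMspos t ht).le.trans hMsX)
  have hW (s : ℝ) (hs : s ∈ Icc 0 t) : |W s| ≤ sSup ((fun s => |W s|) '' Icc 0 t) :=
    le_sSup_image_Icc (f := fun s => |W s|) (hWc.mono hsub).abs hs
  have hbound := abs_integral_mul_sub_mul_div_le hκ hκκ' ha.le
    (mul_pos (hMspos t ht) (hMpos t ht)) hCle (hsup t ht) hW (fun s hs => heq s (hsub hs)) ht.1
  have ht52 : t ^ ((5:ℝ)/2) = t ^ 2 * Real.sqrt t := by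
    rw [Real.sqrt_eq_rpow, ← Real.rpow_two, ← Real.rpow_add' ht.1 (by norm_num)]
    norm_num
  have hκ' : 0 < κ' := hκ.trans hκκ'
  refine (mul_le_mul_of_nonneg_left hbound zero_le_two).trans ?_
  calc _ = (κ' - κ) * (2 * a / (κ' * κ)) * t / (Ms t * M t)
          + Real.sqrt (κ' - κ) * (8 / (κ' * κ ^ 2)) * (t ^ ((5:ℝ)/2)) / (Ms t * M t) ^ 2
          + (κ' - κ) * (2 / (κ' * κ)) * (t / (Ms t * M t)) *
              sSup ((fun s => |W s|) '' Icc 0 t) := by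
        rw [ht52]; field_simp; ring
    _ ≤ _ := by
        gcongr
        · exact Real.rpow_nonneg ht.1 _
        · norm_num

theorem stmt10 (T a κ κ' : ℝ) (hT : 0 < T) (ha : 0 < a)
    (hκ : 0 < κ) (hκκ' : κ < κ') (hκ'4 : κ' ≤ 4)
    (X Xs W : ℝ → ℝ)
    (hXc : ContinuousOn X (Icc 0 T)) (hXsc : ContinuousOn Xs (Icc 0 T))
    (hWc : ContinuousOn W (Icc 0 T)) (hW0 : W 0 = 0)
    (hXpos : ∀ t ∈ Icc (0:ℝ) T, 0 < X t) (hXspos : ∀ t ∈ Icc (0:ℝ) T, 0 < Xs t)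
    (M Ms : ℝ → ℝ)
    (hM : ∀ t ∈ Icc (0:ℝ) T, M t = sInf (X '' Icc 0 t))
    (hMs : ∀ t ∈ Icc (0:ℝ) T, Ms t = sInf (Xs '' Icc 0 t))
    (hMpos : ∀ t ∈ Icc (0:ℝ) T, 0 < M t) (hMspos : ∀ t ∈ Icc (0:ℝ) T, 0 < Ms t)
    (hsup : ∀ t ∈ Icc (0:ℝ) T, ∀ s ∈ Icc (0:ℝ) t,
      |Xs s - X s| ≤ (2 * Real.sqrt t / κ) * Real.sqrt (κ' - κ))
    (heq : ∀ t ∈ Icc (0:ℝ) T,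
      κ' * Xs t - κ * X t
        = (κ' - κ) * a + 4 * (∫ s in (0:ℝ)..t, (X s - Xs s) / (Xs s * X s))
          + (κ' - κ) * W t) :
    ∀ t ∈ Icc (0:ℝ) T,
      2 * |∫ s in (0:ℝ)..t, (κ' * Xs s - κ * X s) / (κ' * κ * (Xs s * X s))|
        ≤ (κ' - κ) * (2 * a / (κ' * κ)) * t / (Ms t * M t)
          + Real.sqrt (κ' - κ) * (16 / (κ' * κ ^ 2)) * (t ^ ((5:ℝ)/2)) / (Ms t * M t) ^ 2
          + (κ' - κ) * (2 / (κ' * κ)) * (t / (Ms t * M t)) *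
              sSup ((fun s => |W s|) '' Icc 0 t) :=
  stmt10_general T a κ κ' ha hκ hκκ' X Xs W hXc hXsc hWc M Ms hM hMs hMpos hMspos hsup heq
end
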